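/- Let F be a flat left R-module. Then: (1) F is a flat object of Flat(R) if and only if F is τ-cotorsion-free; (2) F is a projective object of Flat(R) if and only if F is τ-cotorsion-free and F is projective as an R-module. -/
import Mathlib


universe u

/-- A module `T` is `τ`-torsion (for the torsion theory cogenerated by the flat modules) if
every `R`-linear map from `T` to a flat module is zero. -/
def TauTorsion (R : Type u) [CommRing R] (T : Type u) [AddCommGroup T] [Module R T] : Prop :=
  ∀ (F : Type u) [AddCommGroup F] [Module R F], Module.Flat R F → ∀ f : T →ₗ[R] F, f = 0

variable {R : Type u} [CommRing R]

/-- A module `M` is `τ`-cotorsion-free if its only `τ`-dense submodule is `M` itself. -/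
def TauCotorsionFree (R : Type u) [CommRing R] (M : Type u) [AddCommGroup M] [Module R M] :
    Prop :=
  ∀ K : Submodule R M, TauTorsion R (M ⧸ K) → K = ⊤

/-- `f` is an epimorphism in the category `Flat(R)` of flat modules. -/
def EpiInFlat {F G : Type u} [AddCommGroup F] [Module R F] [AddCommGroup G] [Module R G]
    (f : F →ₗ[R] G) : Prop :=
  ∀ (H : Type u) [AddCommGroup H] [Module R H], Module.Flat R H →
    ∀ g₁ g₂ : G →ₗ[R] H, g₁ ∘ₗ f = g₂ ∘ₗ f → g₁ = g₂

/-- Let `F` be a flat module.  Then: (1) `F` is a flat object of `Flat(R)` (every epimorphism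
of `Flat(R)` with codomain `F` is surjective) iff `F` is `τ`-cotorsion-free; (2) `F` is a
projective object of `Flat(R)` (every epimorphism of `Flat(R)` with codomain `F` splits) iff
`F` is `τ`-cotorsion-free and projective as an `R`-module. -/
theorem flat_and_projective_objects_of_flatCat (F : Type u) [AddCommGroup F] [Module R F]
    [Module.Flat R F] :
    ((∀ (H : Type u) [AddCommGroup H] [Module R H], Module.Flat R H →
        ∀ h : H →ₗ[R] F, EpiInFlat h → Function.Surjective h) ↔
      TauCotorsionFree R F) ∧
    ((∀ (H : Type u) [AddCommGroup H] [Module R H], Module.Flat R H →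
        ∀ h : H →ₗ[R] F, EpiInFlat h → ∃ s : F →ₗ[R] H, h ∘ₗ s = LinearMap.id) ↔
      (TauCotorsionFree R F ∧ Module.Projective R F)) := by
  classical
  -- A surjective map is an epimorphism in Flat(R).
  have epi_of_surj : ∀ (H : Type u) [AddCommGroup H] [Module R H] (h : H →ₗ[R] F),
      Function.Surjective h → EpiInFlat h := by
    intro H _ _ h hs G _ _ _ g₁ g₂ hg
    ext x
    obtain ⟨y, rfl⟩ := hs x
    exact LinearMap.congr_fun hg y
  -- If the quotient by the range is τ-torsion, the map is an epimorphism in Flat(R).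
  have epi_of_torsion : ∀ (H : Type u) [AddCommGroup H] [Module R H] (h : H →ₗ[R] F),
      TauTorsion R (F ⧸ LinearMap.range h) → EpiInFlat h := by
    intro H _ _ h ht G _ _ hG g₁ g₂ hg
    have hker : LinearMap.range h ≤ LinearMap.ker (g₁ - g₂) := by
      rintro x ⟨y, rfl⟩
      simp only [LinearMap.mem_ker, LinearMap.sub_apply, sub_eq_zero]
      exact LinearMap.congr_fun hg y
    have h0 := ht G hG (Submodule.liftQ _ (g₁ - g₂) hker)
    have h2 : g₁ - g₂ = 0 := by
      ext x
      have := LinearMap.congr_fun h0 (Submodule.Quotient.mk x)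
      simpa using this
    exact sub_eq_zero.mp h2
  -- Part (1)
  have part1 : (∀ (H : Type u) [AddCommGroup H] [Module R H], Module.Flat R H →
        ∀ h : H →ₗ[R] F, EpiInFlat h → Function.Surjective h) ↔ TauCotorsionFree R F := by
    constructor
    · intro hyp K hK
      -- build a flat module surjecting onto K
      set h : (K →₀ R) →ₗ[R] F := Finsupp.linearCombination R (fun k : K => (k : F)) with hh
      have hrange : LinearMap.range h = K := by
        rw [hh, Finsupp.range_linearCombination]
        simp [Submodule.span_eq K]
      have hepi : EpiInFlat h := by
        apply epi_of_torsion
        rw [hrange]; exact hK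
      have hsurj := hyp (K →₀ R) inferInstance h hepi
      rw [← hrange]
      exact LinearMap.range_eq_top.mpr hsurj
    · intro hcf H _ _ _ h hepi
      have ht : TauTorsion R (F ⧸ LinearMap.range h) := by
        intro G _ _ hG f
        have hc : (f ∘ₗ (LinearMap.range h).mkQ) ∘ₗ h = (0 : F →ₗ[R] G) ∘ₗ h := by
          ext x
          have hz : (LinearMap.range h).mkQ (h x) = 0 :=
            (Submodule.Quotient.mk_eq_zero _).mpr ⟨x, rfl⟩
          simp [hz]
        have h1 := hepi G hG (f ∘ₗ (LinearMap.range h).mkQ) 0 hc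
        ext y
        exact LinearMap.congr_fun h1 y
      have := hcf _ ht
      exact LinearMap.range_eq_top.mp this
  refine ⟨part1, ?_⟩
  constructor
  · intro hyp
    have hsurj : ∀ (H : Type u) [AddCommGroup H] [Module R H], Module.Flat R H →
        ∀ h : H →ₗ[R] F, EpiInFlat h → Function.Surjective h := by
      intro H _ _ hH h hepi
      obtain ⟨s, hs⟩ := hyp H hH h hepi
      intro x
      exact ⟨s x, LinearMap.congr_fun hs x⟩
    refine ⟨part1.mp hsurj, ?_⟩
    -- F is a split quotient of a free module
    set h : (F →₀ R) →ₗ[R] F := Finsupp.linearCombination R (id : F → F) with hh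
    have hsurj' : Function.Surjective h := by
      intro x
      refine ⟨Finsupp.single x 1, ?_⟩
      rw [hh]
      simp
    obtain ⟨s, hs⟩ := hyp (F →₀ R) inferInstance h (epi_of_surj _ h hsurj')
    exact Module.Projective.of_split s h hs
  · rintro ⟨hcf, hproj⟩ H _ _ hH h hepi
    have hsurj : Function.Surjective h := (part1.mpr hcf) H hH h hepi
    obtain ⟨s, hs⟩ := Module.projective_lifting_property h LinearMap.id hsurj
    exact ⟨s, hs⟩
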